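/- arXiv:1710.07039 — 2 statements merged into one kernel-verified Lean document; each statement's English description precedes it below -/
import Mathlib

section
/- Let V be a finite set, RR : 𝒫(V) → ℝ_{>0} with RR(∅) = 1, and α(D) = Σ_{D' ⊆ D} (-1)^{|D \ D'|} log RR(D'). Define MCE(D) = Π_{D' ⊊ D} exp(α(D')). Then for every D ⊆ V, MCE(D) = ( Π_{D' ⊊ D} RR(D')^{(-1)^{|D \ D'|}} )^{-1}. -/
open Finset Real

/-! The parameters `a` are the Möbius inversion of `log RR` over the subset lattice, so summing them
over all subsets of `D` gives back `log RR(D)`. Removing the top term `α(D)`, whose own top term is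
`log RR(D)`, leaves the sum over proper subsets equal to `-∑_{D' ⊊ D} (-1)^|D \ D'| log RR(D')`;
exponentiating gives the claim. -/

namespace Finset

variable {α R : Type*} [DecidableEq α] [Ring R]

theorem sum_Icc_neg_one_pow_card_sdiff {s t : Finset α} (h : s ⊆ t) :
    ∑ u ∈ Icc s t, (-1 : R) ^ #(u \ s) = if s = t then 1 else 0 := by
  have hshift : ∑ u ∈ Icc s t, (-1 : R) ^ #(u \ s) = ∑ v ∈ (t \ s).powerset, (-1 : R) ^ #v := by
    rw [Icc_eq_image_powerset h, sum_image]
    · refine sum_congr rfl fun v hv => ?_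
      rw [union_sdiff_cancel_left (disjoint_sdiff.mono_right (mem_powerset.1 hv))]
    · intro v hv w hw hvw
      simp only [coe_powerset, Set.mem_preimage, Set.mem_powerset_iff, coe_subset] at hv hw
      rw [← union_sdiff_cancel_left (disjoint_sdiff.mono_right hv),
        ← union_sdiff_cancel_left (disjoint_sdiff.mono_right hw)]
      exact congrArg (· \ s) hvw
  have hsign := congrArg (Int.cast : ℤ → R) (sum_powerset_neg_one_pow_card (x := t \ s))
  push_cast at hsign
  rw [hshift, hsign]
  refine if_congr ⟨fun hts => h.antisymm (sdiff_eq_empty_iff_subset.1 hts), ?_⟩ rfl rfl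
  rintro rfl
  exact sdiff_self

theorem sum_powerset_sum_powerset_neg_one_pow_card_sdiff_mul (f : Finset α → R) (s : Finset α) :
    ∑ t ∈ s.powerset, ∑ u ∈ t.powerset, (-1 : R) ^ #(t \ u) * f u = f s := by
  calc ∑ t ∈ s.powerset, ∑ u ∈ t.powerset, (-1 : R) ^ #(t \ u) * f u
      = ∑ u ∈ s.powerset, (∑ t ∈ Icc u s, (-1 : R) ^ #(t \ u)) * f u := by
        simp_rw [sum_mul]
        exact sum_comm' fun t u => by simp only [mem_powerset, mem_Icc]; grind
    _ = f s := by
        rw [sum_congr rfl fun u hu => by rw [sum_Icc_neg_one_pow_card_sdiff (mem_powerset.1 hu)]]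
        simp

theorem sum_erase_sum_powerset_neg_one_pow_card_sdiff_mul (f : Finset α → R) (s : Finset α) :
    ∑ t ∈ s.powerset.erase s, ∑ u ∈ t.powerset, (-1 : R) ^ #(t \ u) * f u =
      -∑ t ∈ s.powerset.erase s, (-1 : R) ^ #(s \ t) * f t := by
  have hinv := sum_powerset_sum_powerset_neg_one_pow_card_sdiff_mul f s
  have htop := add_sum_erase _ (fun u => (-1 : R) ^ #(s \ u) * f u) (mem_powerset_self s)
  rw [← add_sum_erase _ _ (mem_powerset_self s), ← htop] at hinv
  rw [Finset.sdiff_self, card_empty, pow_zero, one_mul, add_assoc, add_eq_left] at hinv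
  exact eq_neg_of_add_eq_zero_right hinv

end Finset

theorem Real.exp_intCast_mul_log {x : ℝ} (hx : 0 < x) (n : ℤ) : exp (n * log x) = x ^ n := by
  rw [← log_zpow, exp_log (zpow_pos hx n)]

theorem lemma2_marginal_causal_effect_general
    {α : Type*} [DecidableEq α] (V : Finset α)
    (RR : Finset α → ℝ) (hpos : ∀ D, 0 < RR D)
    (a : Finset α → ℝ)
    (ha : ∀ D, a D = ∑ D' ∈ D.powerset, (-1 : ℝ) ^ ((D \ D').card) * Real.log (RR D'))
    (MCE : Finset α → ℝ)
    (hMCE : ∀ D, MCE D = ∏ D' ∈ D.powerset.erase D, Real.exp (a D')) :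
    ∀ D ⊆ V, MCE D = (∏ D' ∈ D.powerset.erase D, RR D' ^ ((-1 : ℤ) ^ ((D \ D').card)))⁻¹ := by
  intro D _
  have hsum : ∑ D' ∈ D.powerset.erase D, a D' =
      -∑ D' ∈ D.powerset.erase D, (((-1 : ℤ) ^ #(D \ D') : ℤ) : ℝ) * log (RR D') := by
    simp only [ha, Int.cast_pow, Int.cast_neg, Int.cast_one]
    exact sum_erase_sum_powerset_neg_one_pow_card_sdiff_mul (fun D' => log (RR D')) D
  rw [hMCE, ← exp_sum, hsum, exp_neg, exp_sum]
  simp only [exp_intCast_mul_log (hpos _)]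

theorem lemma2_marginal_causal_effect
    {α : Type*} [DecidableEq α] (V : Finset α)
    (RR : Finset α → ℝ) (hpos : ∀ D, 0 < RR D) (hempty : RR ∅ = 1)
    (a : Finset α → ℝ)
    (ha : ∀ D, a D = ∑ D' ∈ D.powerset, (-1 : ℝ) ^ ((D \ D').card) * Real.log (RR D'))
    (MCE : Finset α → ℝ)
    (hMCE : ∀ D, MCE D = ∏ D' ∈ D.powerset.erase D, Real.exp (a D')) :
    ∀ D ⊆ V, MCE D = (∏ D' ∈ D.powerset.erase D, RR D' ^ ((-1 : ℤ) ^ ((D \ D').card)))⁻¹ :=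
  lemma2_marginal_causal_effect_general V RR hpos a ha MCE hMCE
end

section
/- Let (Y_v)_{v ∈ V} be {0,1}-valued random variables with joint-success probabilities μ(D) = P(∀ v ∈ D, Y_v = 1) > 0 for all D ⊆ V (μ(∅) = 1), and define the log-mean linear interaction γ(D) = Σ_{D' ⊆ D} (-1)^{|D \ D'|} log μ(D'). If there is a partition of V into nonempty disjoint sets A and B such that the vectors (Y_v)_{v ∈ A} and (Y_v)_{v ∈ B} are independent, then γ(D) = 0 for every D ⊆ V that intersects both A and B. -/
open MeasureTheory ProbabilityTheory Finset Real

/-!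
Independence of the two blocks factorises every joint-success probability as
`μ D = μ (D ∩ A) * μ (D ∩ B)`, so `log μ` splits into a function that ignores the coordinates in
`B` plus one that ignores those in `A`. The Möbius transform on the Boolean lattice is linear and
kills every set function that ignores some coordinate of `D`: grouping the subsets of `D` in pairs
`E`, `insert i E` gives the difference operator in the direction `i`.
-/

section BooleanMobius

variable {ι R : Type*} [DecidableEq ι] [CommRing R]

def booleanMobius (f : Finset ι → R) (D : Finset ι) : R :=
  ∑ E ∈ D.powerset, (-1) ^ (D \ E).card * f E

theorem booleanMobius_congr {f g : Finset ι → R} {D : Finset ι} (h : ∀ E ⊆ D, f E = g E) :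
    booleanMobius f D = booleanMobius g D :=
  sum_congr rfl fun E hE => by rw [h E (mem_powerset.1 hE)]

theorem booleanMobius_add (f g : Finset ι → R) (D : Finset ι) :
    booleanMobius (fun E => f E + g E) D = booleanMobius f D + booleanMobius g D := by
  simp only [booleanMobius, mul_add, sum_add_distrib]

theorem booleanMobius_insert (f : Finset ι → R) {S : Finset ι} {i : ι} (hi : i ∉ S) :
    booleanMobius f (insert i S) = booleanMobius (fun E => f (insert i E) - f E) S := by
  rw [booleanMobius, sum_powerset_insert hi, booleanMobius, ← sum_add_distrib]
  refine sum_congr rfl fun E hE => ?_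
  have hiE : i ∉ E := fun h => hi (mem_powerset.1 hE h)
  rw [insert_sdiff_of_notMem _ hiE, card_insert_of_notMem (fun h => hi (mem_sdiff.1 h).1),
    insert_sdiff_insert, sdiff_insert_of_notMem hi, pow_succ]
  ring

theorem booleanMobius_eq_zero_of_insert_eq {f : Finset ι → R} {D : Finset ι} {i : ι}
    (hi : i ∈ D) (hf : ∀ E, f (insert i E) = f E) : booleanMobius f D = 0 := by
  rw [← insert_erase hi, booleanMobius_insert f (notMem_erase i D)]
  simp [booleanMobius, hf]

end BooleanMobius

section JointSuccess

variable {Ω ι β : Type*}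

theorem measurableSet_forall_mem_eq [MeasurableSpace β] [MeasurableSingletonClass β]
    (C E : Finset ι) (c : β) :
    MeasurableSet {x : C → β | ∀ a : C, (a : ι) ∈ E → x a = c} := by
  simp only [Set.ofPred_forall]
  exact .iInter fun a => .iInter fun _ => (measurableSet_singleton c).preimage (measurable_pi_apply a)

theorem preimage_block_forall_mem_eq (Y : ι → Ω → β) {C E : Finset ι} (hE : E ⊆ C) (c : β) :
    {ω | ∀ v ∈ E, Y v ω = c} =
      (fun ω (a : C) => Y a ω) ⁻¹' {x | ∀ a : C, (a : ι) ∈ E → x a = c} := by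
  ext ω
  exact ⟨fun h a ha => h a ha, fun h v hv => h ⟨v, hE hv⟩ hv⟩

theorem measure_forall_mem_eq_mul_of_indepFun [DecidableEq ι] [MeasurableSpace Ω]
    [MeasurableSpace β] [MeasurableSingletonClass β] (P : Measure Ω) (Y : ι → Ω → β) (c : β)
    {A B : Finset ι}
    (hindep : IndepFun (fun ω (a : A) => Y a ω) (fun ω (b : B) => Y b ω) P)
    {D : Finset ι} (hD : D ⊆ A ∪ B) :
    P {ω | ∀ v ∈ D, Y v ω = c} =
      P {ω | ∀ v ∈ D ∩ A, Y v ω = c} * P {ω | ∀ v ∈ D ∩ B, Y v ω = c} := by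
  have hsplit : {ω | ∀ v ∈ D, Y v ω = c} =
      {ω | ∀ v ∈ D ∩ A, Y v ω = c} ∩ {ω | ∀ v ∈ D ∩ B, Y v ω = c} := by
    conv_lhs => rw [← inter_eq_left.2 hD, inter_union_distrib_left]
    ext ω
    simp only [Set.mem_ofPred_eq, Set.mem_inter_iff, mem_union, or_imp, forall_and]
  rw [hsplit, preimage_block_forall_mem_eq Y inter_subset_right,
    preimage_block_forall_mem_eq Y inter_subset_right,
    hindep.measure_inter_preimage_eq_mul _ _ (measurableSet_forall_mem_eq _ _ c)
      (measurableSet_forall_mem_eq _ _ c)]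

end JointSuccess

theorem gamma_vanishes_of_independent_blocks_general
    {Ω : Type*} {ι : Type*} [DecidableEq ι] [MeasurableSpace Ω]
    (P : Measure Ω)
    (Y : ι → Ω → ℕ)
    (V : Finset ι)
    (μ : Finset ι → ℝ)
    (hμ : ∀ D, μ D = (P {ω | ∀ v ∈ D, Y v ω = 1}).toReal)
    (hpos : ∀ D ⊆ V, 0 < μ D)
    (γ : Finset ι → ℝ)
    (hγ : ∀ D, γ D = ∑ D' ∈ D.powerset, (-1 : ℝ) ^ ((D \ D').card) * Real.log (μ D'))
    (A B : Finset ι)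
    (hdisj : Disjoint A B) (hunion : A ∪ B = V)
    (hindep : IndepFun (fun ω => fun a : {v // v ∈ A} => Y a.1 ω)
      (fun ω => fun b : {v // v ∈ B} => Y b.1 ω) P) :
    ∀ D ⊆ V, (D ∩ A).Nonempty → (D ∩ B).Nonempty → γ D = 0 := by
  intro D hD ⟨a, haDA⟩ ⟨b, hbDB⟩
  have hlog_split : ∀ E ⊆ D, log (μ E) = log (μ (E ∩ A)) + log (μ (E ∩ B)) := by
    intro E hE
    have hEV : E ⊆ V := hE.trans hD
    rw [hμ, measure_forall_mem_eq_mul_of_indepFun P Y 1 hindep (hunion ▸ hEV),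
      ENNReal.toReal_mul, ← hμ, ← hμ,
      log_mul (hpos _ (inter_subset_left.trans hEV)).ne' (hpos _ (inter_subset_left.trans hEV)).ne']
  have hbA : b ∉ A := disjoint_right.1 hdisj (mem_inter.1 hbDB).2
  have haB : a ∉ B := disjoint_left.1 hdisj (mem_inter.1 haDA).2
  rw [hγ]
  change booleanMobius (fun E => log (μ E)) D = 0
  rw [booleanMobius_congr hlog_split,
    booleanMobius_add (fun E => log (μ (E ∩ A))) (fun E => log (μ (E ∩ B))),
    booleanMobius_eq_zero_of_insert_eq (mem_inter.1 hbDB).1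
      fun E => by rw [insert_inter_of_notMem hbA],
    booleanMobius_eq_zero_of_insert_eq (mem_inter.1 haDA).1
      fun E => by rw [insert_inter_of_notMem haB], add_zero]

theorem gamma_vanishes_of_independent_blocks
    {Ω : Type*} {ι : Type*} [DecidableEq ι] [MeasurableSpace Ω]
    (P : Measure Ω) [IsProbabilityMeasure P]
    (Y : ι → Ω → ℕ)
    (hbin : ∀ v ω, Y v ω = 0 ∨ Y v ω = 1)
    (hmeas : ∀ v, Measurable (Y v))
    (V : Finset ι)
    (μ : Finset ι → ℝ)
    (hμ : ∀ D, μ D = (P {ω | ∀ v ∈ D, Y v ω = 1}).toReal)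
    (hpos : ∀ D ⊆ V, 0 < μ D)
    (γ : Finset ι → ℝ)
    (hγ : ∀ D, γ D = ∑ D' ∈ D.powerset, (-1 : ℝ) ^ ((D \ D').card) * Real.log (μ D'))
    (A B : Finset ι) (hA : A.Nonempty) (hB : B.Nonempty)
    (hdisj : Disjoint A B) (hunion : A ∪ B = V)
    (hindep : IndepFun (fun ω => fun a : {v // v ∈ A} => Y a.1 ω)
      (fun ω => fun b : {v // v ∈ B} => Y b.1 ω) P) :
    ∀ D ⊆ V, (D ∩ A).Nonempty → (D ∩ B).Nonempty → γ D = 0 :=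
  gamma_vanishes_of_independent_blocks_general P Y V μ hμ hpos γ hγ A B hdisj hunion hindep
end
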